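/- Let X be a nonnegative random variable with cumulative distribution function F, finite second moment E[X²] = ∫₀^∞ 2x(1 − F(x)) dx, and suppose X is DFR, i.e. the survival function 1 − F is log-convex on [0, ∞) (equivalently, for every x ≥ 0 the ratio (1 − F(t + x))/(1 − F(t)) is nondecreasing in t on the set where 1 − F(t) > 0). Then the cumulative entropy of X satisfies the lower bound 𝓒𝓔(X) ≥ E[X] − (√(E[X²])/√2)·(2 − π²/6). -/

import Mathlib

/-!
DFR makes the survival function `S = 1 - F` new-worse-than-used, `S t * S x ≤ S (t + x)`:
compare the ratio `S (t + x) / S t` at `t` and at `0`. Integrating `S t * S u ≤ S (t + u)` over the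
quadrant gives `(E X)² ≤ ∫ x S x = E[X²] / 2`. On the other hand `-F log F = S - φ (S)` with
`φ s = s + (1 - s) log (1 - s) = ∑ s ^ (n + 2) / ((n + 1) (n + 2))`, and the termwise bound
`S ^ (n + 2) ≤ S ((n + 2) ·)` gives `∫ φ (S) ≤ E X ∑ 1 / ((n + 1) (n + 2)²) = E X (2 - π² / 6)`.
Hence `𝓒𝓔 ≥ E X - E X (2 - π² / 6) ≥ E X - √(E[X²] / 2) (2 - π² / 6)`.
-/

open Real MeasureTheory ProbabilityTheory Set
open scoped ENNReal

lemma hasSum_one_div_succ_mul_add_two :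
    HasSum (fun n : ℕ => 1 / (((n : ℝ) + 1) * ((n : ℝ) + 2))) 1 := by
  have htel (n : ℕ) : 1 / (((n : ℝ) + 1) * ((n : ℝ) + 2))
      = 1 / ((n : ℝ) + 1) - 1 / (((n + 1 : ℕ) : ℝ) + 1) := by
    push_cast
    field_simp
    ring
  rw [hasSum_iff_tendsto_nat_of_nonneg (fun n => by positivity)]
  simp_rw [htel, Finset.sum_range_sub', Nat.cast_zero, zero_add, div_one]
  simpa using (tendsto_const_nhds (x := (1 : ℝ))).sub tendsto_one_div_add_atTop_nhds_zero_nat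

lemma hasSum_one_div_add_two_sq : HasSum (fun n : ℕ => 1 / ((n : ℝ) + 2) ^ 2) (π ^ 2 / 6 - 1) := by
  have h := (hasSum_nat_add_iff' 2).mpr hasSum_zeta_two
  norm_num [Finset.sum_range_succ] at h
  simpa using h

lemma hasSum_one_div_succ_mul_add_two_sq :
    HasSum (fun n : ℕ => 1 / (((n : ℝ) + 1) * ((n : ℝ) + 2) ^ 2)) (2 - π ^ 2 / 6) := by
  have h := hasSum_one_div_succ_mul_add_two.sub hasSum_one_div_add_two_sq
  rw [show (1 : ℝ) - (π ^ 2 / 6 - 1) = 2 - π ^ 2 / 6 by ring] at h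
  refine h.congr_fun fun n => ?_
  field_simp
  ring

lemma hasSum_pow_add_two_div {s : ℝ} (h₀ : -1 < s) (h₁ : s ≤ 1) :
    HasSum (fun n : ℕ => s ^ (n + 2) / (((n : ℝ) + 1) * ((n : ℝ) + 2)))
      (s + (1 - s) * log (1 - s)) := by
  rcases h₁.eq_or_lt with rfl | h₁
  · simpa using hasSum_one_div_succ_mul_add_two
  have hlog := hasSum_pow_div_log_of_abs_lt_one (abs_lt.2 ⟨h₀, h₁⟩)
  -- `1 / ((n + 1) (n + 2)) = 1 / (n + 1) - 1 / (n + 2)` splits the series into two log series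
  have h := (hlog.mul_left s).sub ((hasSum_nat_add_iff' 1).mpr hlog)
  rw [show s * -log (1 - s) - (-log (1 - s) - ∑ i ∈ Finset.range 1, s ^ (i + 1) / (i + 1))
    = s + (1 - s) * log (1 - s) by simp; ring] at h
  refine h.congr_fun fun n => ?_
  push_cast
  field_simp
  ring

def NewWorseThanUsed (S : ℝ → ℝ) : Prop :=
  ∀ ⦃t x : ℝ⦄, 0 ≤ t → 0 ≤ x → S t * S x ≤ S (t + x)

lemma newWorseThanUsed_of_monotoneOn_div {S : ℝ → ℝ} (hS : Antitone S) (h0 : ∀ x, 0 ≤ S x)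
    (h1 : S 0 ≤ 1)
    (hdfr : ∀ x, 0 ≤ x → MonotoneOn (fun t => S (t + x) / S t) {t | 0 ≤ t ∧ 0 < S t}) :
    NewWorseThanUsed S := by
  intro t x ht hx
  rcases (h0 t).eq_or_lt with hSt0 | hSt
  · rw [← hSt0, zero_mul]
    exact h0 _
  have hS0 : 0 < S 0 := hSt.trans_le (hS ht)
  have hratio := hdfr x hx ⟨le_rfl, hS0⟩ ⟨ht, hSt⟩ ht
  simp only [zero_add] at hratio
  calc S t * S x ≤ S t * (S x / S 0) := by gcongr; exact le_div_self (h0 x) hS0 h1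
    _ ≤ S t * (S (t + x) / S t) := by gcongr
    _ = S (t + x) := mul_div_cancel₀ _ hSt.ne'

lemma lintegral_Ioi_lintegral_Ioi_add {f : ℝ → ℝ≥0∞} (hf : Measurable f) :
    ∫⁻ t in Ioi 0, ∫⁻ u in Ioi 0, f (t + u) = ∫⁻ v in Ioi 0, ENNReal.ofReal v * f v := by
  have hshift : ∀ t ∈ Ioi (0 : ℝ),
      ∫⁻ u in Ioi 0, f (t + u) = ∫⁻ v in Ioi 0, (Ioi t).indicator f v := by
    intro t ht
    rw [lintegral_indicator measurableSet_Ioi, Measure.restrict_restrict measurableSet_Ioi,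
      inter_eq_left.2 (Ioi_subset_Ioi (le_of_lt ht))]
    simpa using (measurePreserving_add_left volume t).setLIntegral_comp_preimage_emb
      (measurableEmbedding_addLeft t) f (Ioi t)
  have hswap : ∀ v ∈ Ioi (0 : ℝ),
      ∫⁻ t in Ioi 0, (Ioi t).indicator f v = ENNReal.ofReal v * f v := by
    intro v hv
    have hind (t : ℝ) : (Ioi t).indicator f v = (Iio v).indicator (fun _ => f v) t := by
      simp [indicator_apply]
    simp_rw [hind]
    rw [lintegral_indicator measurableSet_Iio, setLIntegral_const,
      Measure.restrict_apply measurableSet_Iio, Iio_inter_Ioi, Real.volume_Ioo, sub_zero, mul_comm]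
  rw [setLIntegral_congr_fun measurableSet_Ioi hshift, lintegral_lintegral_swap,
    setLIntegral_congr_fun measurableSet_Ioi hswap]
  change AEMeasurable (fun p : ℝ × ℝ => {q : ℝ × ℝ | q.1 < q.2}.indicator (fun q => f q.2) p) _
  exact ((hf.comp measurable_snd).indicator
    (measurableSet_lt measurable_fst measurable_snd)).aemeasurable

namespace NewWorseThanUsed

variable {S : ℝ → ℝ}

lemma pow_succ_le (hS : NewWorseThanUsed S) (h0 : ∀ x, 0 ≤ S x) {x : ℝ} (hx : 0 ≤ x) (n : ℕ) :
    S x ^ (n + 1) ≤ S ((n + 1) * x) := by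
  induction n with
  | zero => simp
  | succ n ih =>
    calc S x ^ (n + 1 + 1) = S x ^ (n + 1) * S x := pow_succ _ _
      _ ≤ S ((n + 1) * x) * S x := by gcongr; exact h0 x
      _ ≤ S ((n + 1) * x + x) := hS (by positivity) hx
      _ = S (((n + 1 : ℕ) + 1) * x) := by push_cast; ring_nf

lemma sq_setIntegral_le (hS : NewWorseThanUsed S) (hm : Measurable S) (h0 : ∀ x, 0 ≤ S x)
    (hint : IntegrableOn S (Ioi 0)) (hxint : IntegrableOn (fun x => x * S x) (Ioi 0)) :
    (∫ x in Ioi 0, S x) ^ 2 ≤ ∫ x in Ioi 0, x * S x := by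
  have hxS0 : ∀ x ∈ Ioi (0 : ℝ), 0 ≤ x * S x := fun x hx => mul_nonneg (le_of_lt hx) (h0 x)
  have hmS : Measurable fun x => ENNReal.ofReal (S x) := hm.ennreal_ofReal
  rw [← ENNReal.ofReal_le_ofReal_iff (setIntegral_nonneg measurableSet_Ioi hxS0), sq,
    ENNReal.ofReal_mul (setIntegral_nonneg measurableSet_Ioi fun x _ => h0 x),
    ofReal_integral_eq_lintegral_ofReal hint (ae_of_all _ h0),
    ofReal_integral_eq_lintegral_ofReal hxint (ae_restrict_of_forall_mem measurableSet_Ioi hxS0)]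
  calc (∫⁻ t in Ioi 0, ENNReal.ofReal (S t)) * ∫⁻ u in Ioi 0, ENNReal.ofReal (S u)
      = ∫⁻ t in Ioi 0, ∫⁻ u in Ioi 0, ENNReal.ofReal (S t) * ENNReal.ofReal (S u) := by
        rw [← lintegral_mul_const _ hmS]
        simp_rw [lintegral_const_mul _ hmS]
    _ ≤ ∫⁻ t in Ioi 0, ∫⁻ u in Ioi 0, ENNReal.ofReal (S (t + u)) := by
        refine setLIntegral_mono' measurableSet_Ioi fun t ht =>
          setLIntegral_mono' measurableSet_Ioi fun u hu => ?_
        rw [← ENNReal.ofReal_mul (h0 t)]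
        exact ENNReal.ofReal_le_ofReal (hS (le_of_lt ht) (le_of_lt hu))
    _ = ∫⁻ v in Ioi 0, ENNReal.ofReal v * ENNReal.ofReal (S v) :=
        lintegral_Ioi_lintegral_Ioi_add hmS
    _ = ∫⁻ v in Ioi 0, ENNReal.ofReal (v * S v) :=
        setLIntegral_congr_fun measurableSet_Ioi fun v hv => (ENNReal.ofReal_mul (le_of_lt hv)).symm

lemma setIntegral_add_one_sub_mul_log_le (hS : NewWorseThanUsed S) (hm : Measurable S)
    (h0 : ∀ x, 0 ≤ S x) (h1 : ∀ x, S x ≤ 1) (hint : IntegrableOn S (Ioi 0)) :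
    ∫ x in Ioi 0, (S x + (1 - S x) * log (1 - S x)) ≤ (∫ x in Ioi 0, S x) * (2 - π ^ 2 / 6) := by
  set I := ∫ x in Ioi 0, S x with hI
  set F : ℕ → ℝ → ℝ := fun n x => S x ^ (n + 2) / (((n : ℝ) + 1) * ((n : ℝ) + 2))
  have hF0 (n : ℕ) (x : ℝ) : 0 ≤ F n x := by have := h0 x; positivity
  have hFint (n : ℕ) : IntegrableOn (F n) (Ioi 0) := by
    refine (hint.div_const (((n : ℝ) + 1) * ((n : ℝ) + 2))).mono'
      ((hm.pow_const _).div_const _).aestronglyMeasurable (ae_of_all _ fun x => ?_)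
    rw [Real.norm_of_nonneg (hF0 n x)]
    dsimp only [F]
    gcongr
    exact pow_le_of_le_one (h0 x) (h1 x) (by omega)
  have hdil (n : ℕ) : IntegrableOn (fun x => S (((n : ℝ) + 2) * x)) (Ioi 0) :=
    (integrableOn_Ioi_comp_mul_left_iff S 0 (by positivity)).2 (by simpa using hint)
  -- `S x ^ (n + 2) ≤ S ((n + 2) x)` and the substitution `y = (n + 2) x`
  have hFle (n : ℕ) :
      ∫ x in Ioi 0, F n x ≤ I * (1 / (((n : ℝ) + 1) * ((n : ℝ) + 2) ^ 2)) := by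
    calc ∫ x in Ioi 0, F n x
        ≤ ∫ x in Ioi 0, S (((n : ℝ) + 2) * x) / (((n : ℝ) + 1) * ((n : ℝ) + 2)) := by
          refine setIntegral_mono_on (hFint n) ((hdil n).div_const _) measurableSet_Ioi
            fun x hx => ?_
          dsimp only [F]
          gcongr
          simpa [add_assoc, one_add_one_eq_two] using hS.pow_succ_le h0 (le_of_lt hx) (n + 1)
      _ = I * (1 / (((n : ℝ) + 1) * ((n : ℝ) + 2) ^ 2)) := by
          rw [integral_div, integral_comp_mul_left_Ioi S 0 (by positivity), mul_zero,
            smul_eq_mul, ← hI]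
          field_simp
  have hcoef := hasSum_one_div_succ_mul_add_two_sq.mul_left I
  have hsum : HasSum (fun n => ∫ x in Ioi 0, F n x)
      (∫ x in Ioi 0, (S x + (1 - S x) * log (1 - S x))) := by
    have hnorm : Summable fun n => ∫ x in Ioi 0, ‖F n x‖ := by
      simp_rw [Real.norm_of_nonneg (hF0 _ _)]
      exact hcoef.summable.of_nonneg_of_le
        (fun n => setIntegral_nonneg measurableSet_Ioi fun x _ => hF0 n x) hFle
    have hφ (x : ℝ) : S x + (1 - S x) * log (1 - S x) = ∑' n, F n x :=
      (hasSum_pow_add_two_div (by linarith [h0 x]) (h1 x)).tsum_eq.symm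
    simp_rw [hφ]
    exact hasSum_integral_of_summable_integral_norm hFint hnorm
  exact hasSum_le hFle hsum hcoef

end NewWorseThanUsed

lemma integrableOn_Ioi_of_bounded_of_integrableOn_mul {f : ℝ → ℝ} {C : ℝ}
    (hm : AEStronglyMeasurable f) (hC : ∀ x, ‖f x‖ ≤ C) (hx : IntegrableOn (fun x => x * f x) (Ioi 0)) :
    IntegrableOn f (Ioi 0) := by
  rw [← Ioc_union_Ioi_eq_Ioi zero_le_one]
  refine (Measure.integrableOn_of_bounded (by simp) hm (ae_of_all _ hC)).union ?_
  refine Integrable.mono (hx.mono_set (Ioi_subset_Ioi zero_le_one)) hm.restrict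
    (ae_restrict_of_forall_mem measurableSet_Ioi fun x hx => ?_)
  rw [norm_mul, Real.norm_of_nonneg (zero_le_one.trans (le_of_lt hx))]
  exact le_mul_of_one_le_left (norm_nonneg _) (le_of_lt hx)

lemma integrableOn_add_one_sub_mul_log_one_sub {S : ℝ → ℝ} {s : Set ℝ} (hm : Measurable S)
    (h0 : ∀ x, 0 ≤ S x) (h1 : ∀ x, S x ≤ 1) (hint : IntegrableOn S s) :
    IntegrableOn (fun x => S x + (1 - S x) * log (1 - S x)) s := by
  refine hint.mono' (by fun_prop) (ae_of_all _ fun x => ?_)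
  have hφ := hasSum_pow_add_two_div (by linarith [h0 x]) (h1 x)
  rw [Real.norm_of_nonneg (hφ.nonneg fun n => by have := h0 x; positivity)]
  linarith [mul_log_nonpos (sub_nonneg.2 (h1 x)) (sub_le_self 1 (h0 x))]

theorem ce_ge_of_dfr_general
    (μ : Measure ℝ)
    (hmom2 : IntegrableOn (fun x => 2 * x * (1 - cdf μ x)) (Set.Ioi 0) volume)
    (hdfr : ∀ x : ℝ, 0 ≤ x →
      MonotoneOn (fun t => (1 - cdf μ (t + x)) / (1 - cdf μ t))
        {t : ℝ | 0 ≤ t ∧ cdf μ t < 1}) :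
    -∫ x in Set.Ioi (0 : ℝ), cdf μ x * Real.log (cdf μ x)
      ≥ (∫ x in Set.Ioi (0 : ℝ), (1 - cdf μ x))
          - Real.sqrt (∫ x in Set.Ioi (0 : ℝ), 2 * x * (1 - cdf μ x)) / Real.sqrt 2
              * (2 - Real.pi ^ 2 / 6) := by
  set S : ℝ → ℝ := fun x => 1 - cdf μ x
  have h0 (x : ℝ) : 0 ≤ S x := sub_nonneg.2 (cdf_le_one μ x)
  have h1 (x : ℝ) : S x ≤ 1 := sub_le_self 1 (cdf_nonneg μ x)
  have hm : Measurable S := measurable_const.sub (monotone_cdf μ).measurable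
  have hnwu : NewWorseThanUsed S := newWorseThanUsed_of_monotoneOn_div
    (fun _ _ hab => sub_le_sub_left (monotone_cdf μ hab) 1) h0 (h1 0) (by simpa [S] using hdfr)
  have hxS : IntegrableOn (fun x => x * S x) (Ioi 0) :=
    IntegrableOn.congr_fun (hmom2.div_const 2) (fun x _ => by ring) measurableSet_Ioi
  have hSint : IntegrableOn S (Ioi 0) := integrableOn_Ioi_of_bounded_of_integrableOn_mul
    hm.aestronglyMeasurable (fun x => (Real.norm_of_nonneg (h0 x)).trans_le (h1 x)) hxS
  have hent : ∫ x in Ioi 0, cdf μ x * log (cdf μ x)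
      = (∫ x in Ioi 0, (S x + (1 - S x) * log (1 - S x))) - ∫ x in Ioi 0, S x := by
    rw [← integral_sub (integrableOn_add_one_sub_mul_log_one_sub hm h0 h1 hSint) hSint]
    simp [S]
  have hmean : ∫ x in Ioi 0, S x ≤ √(∫ x in Ioi 0, 2 * x * S x) / √2 := by
    simp_rw [mul_assoc, integral_const_mul, Real.sqrt_mul zero_le_two]
    rw [mul_div_cancel_left₀ _ (by positivity)]
    exact (le_abs_self _).trans (Real.abs_le_sqrt (hnwu.sq_setIntegral_le hm h0 hSint hxS))
  have hφ := hnwu.setIntegral_add_one_sub_mul_log_le hm h0 h1 hSint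
  have hc : 0 ≤ 2 - π ^ 2 / 6 := by nlinarith [pi_lt_d2, pi_pos]
  rw [hent, ge_iff_le]
  linarith [mul_le_mul_of_nonneg_right hmean hc]

/-- Let `X` be a nonnegative random variable with cdf `F = cdf μ` and finite
second moment `E[X²] = ∫₀^∞ 2x (1 - F x) dx`, and suppose `X` is DFR: for every `x ≥ 0` the
ratio `(1 - F (t + x)) / (1 - F t)` is nondecreasing in `t` on the set where `t ≥ 0` and
`1 - F t > 0` (log-convexity of the survival function on `[0, ∞)`). Then the cumulative
entropy satisfies `𝓒𝓔(X) ≥ E[X] - (√(E[X²])/√2) (2 - π²/6)`. -/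
theorem ce_ge_of_dfr
    (μ : Measure ℝ) [IsProbabilityMeasure μ] (hnonneg : μ (Set.Iio 0) = 0)
    (hmom2 : IntegrableOn (fun x => 2 * x * (1 - cdf μ x)) (Set.Ioi 0) volume)
    (hdfr : ∀ x : ℝ, 0 ≤ x →
      MonotoneOn (fun t => (1 - cdf μ (t + x)) / (1 - cdf μ t))
        {t : ℝ | 0 ≤ t ∧ cdf μ t < 1}) :
    -∫ x in Set.Ioi (0 : ℝ), cdf μ x * Real.log (cdf μ x)
      ≥ (∫ x in Set.Ioi (0 : ℝ), (1 - cdf μ x))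
          - Real.sqrt (∫ x in Set.Ioi (0 : ℝ), 2 * x * (1 - cdf μ x)) / Real.sqrt 2
              * (2 - Real.pi ^ 2 / 6) :=
  ce_ge_of_dfr_general μ hmom2 hdfr
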